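/- For t ∈ ℝ let x₁(u,v,t) = (u + v − 2uv + 4 t u v (1−u)(1−v)(1−2u)(1−2v), v, u), and let H₁(u,v,t) = e₁G₁ − 2F₁f₁ + g₁E₁ be the mean-curvature numerator of the surface (u,v) ↦ x₁(u,v,t). Then: (i) for every fixed (u,v), t ↦ H₁(u,v,t) is a polynomial of degree at most 3, with H₁(u,v,0) = −4(1−2u)(1−2v); and (ii) the function μ₁²(t) = ∫₀¹ ∫₀¹ H₁(u,v,t)² du dv has strictly negative derivative at t = 0, so the curvature ansatz decreases the mean-square curvature to first order. -/

import Mathlib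

/- Differential-geometric framework: partial derivatives, fundamental magnitudes,
   cross product and mean-curvature numerator for parametrized surfaces x : ℝ² → ℝ³. -/

noncomputable section
open Real MeasureTheory intervalIntegral
open scoped RealInnerProductSpace

abbrev E3 : Type := EuclideanSpace ℝ (Fin 3)

/-- The vector (a, b, c) ∈ ℝ³. -/
def vec3 (a b c : ℝ) : E3 := WithLp.toLp 2 ![a, b, c]

/-- Cross product on ℝ³. -/
def cross (a b : E3) : E3 :=
  vec3 (a 1 * b 2 - a 2 * b 1) (a 2 * b 0 - a 0 * b 2) (a 0 * b 1 - a 1 * b 0)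

/-- Partial derivative with respect to the first parameter. -/
def pu (x : ℝ → ℝ → E3) (u v : ℝ) : E3 := deriv (fun s => x s v) u

/-- Partial derivative with respect to the second parameter. -/
def pv (x : ℝ → ℝ → E3) (u v : ℝ) : E3 := deriv (fun s => x u s) v

/-- First fundamental magnitude E = ⟨x_u, x_u⟩. -/
def Emag (x : ℝ → ℝ → E3) (u v : ℝ) : ℝ := ⟪pu x u v, pu x u v⟫

/-- First fundamental magnitude F = ⟨x_u, x_v⟩. -/
def Fmag (x : ℝ → ℝ → E3) (u v : ℝ) : ℝ := ⟪pu x u v, pv x u v⟫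

/-- First fundamental magnitude G = ⟨x_v, x_v⟩. -/
def Gmag (x : ℝ → ℝ → E3) (u v : ℝ) : ℝ := ⟪pv x u v, pv x u v⟫

/-- Cross-product second fundamental magnitude e = ⟨x_uu, x_u × x_v⟩. -/
def emag (x : ℝ → ℝ → E3) (u v : ℝ) : ℝ := ⟪pu (pu x) u v, cross (pu x u v) (pv x u v)⟫

/-- Cross-product second fundamental magnitude f = ⟨x_uv, x_u × x_v⟩. -/
def fmag (x : ℝ → ℝ → E3) (u v : ℝ) : ℝ := ⟪pv (pu x) u v, cross (pu x u v) (pv x u v)⟫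

/-- Cross-product second fundamental magnitude g = ⟨x_vv, x_u × x_v⟩. -/
def gmag (x : ℝ → ℝ → E3) (u v : ℝ) : ℝ := ⟪pv (pv x) u v, cross (pu x u v) (pv x u v)⟫

/-- Mean-curvature numerator H = eG − 2Ff + gE. -/
def Hnum (x : ℝ → ℝ → E3) (u v : ℝ) : ℝ :=
  emag x u v * Gmag x u v - 2 * Fmag x u v * fmag x u v + gmag x u v * Emag x u v

/-- The curvature-ansatz family for the bilinear interpolant:
x₁(u,v,t) = (u + v − 2uv + 4 t u v (1−u)(1−v)(1−2u)(1−2v), v, u). -/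
def bilinVar (t : ℝ) : ℝ → ℝ → E3 :=
  fun u v => vec3
    (u + v - 2 * u * v
      + 4 * t * u * v * (1 - u) * (1 - v) * (1 - 2 * u) * (1 - 2 * v)) v u

/-! The surface `bilinVar t` is the graph `(u, v) ↦ (φ u v, v, u)` with
`φ = u + v - 2uv + 4t·bump(u)·bump(v)`, `bump(s) = s(1 - s)(1 - 2s)`, whose mean-curvature
numerator is `-φ_uu (φ_v² + 1) + 2 φ_u φ_v φ_uv - φ_vv (φ_u² + 1)`. Every partial derivative of
`φ` is affine in `t` and `φ_uu`, `φ_vv` vanish at `t = 0`, so the numerator is a cubic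
`∑ t^k h_k(u, v)` with `h₀ = -4(1 - 2u)(1 - 2v)`. Consequently
`μ₁²(t) = ∑_{j,k} t^(j+k) ∫∫ h_j h_k` is a polynomial in `t`, with derivative
`2 ∫∫ h₀ h₁ = -512/75` at `t = 0`. -/

open Finset Function

lemma sq_sum_range_pow_mul {R : Type*} [CommSemiring R] (n : ℕ) (t : R) (h : ℕ → R) :
    (∑ k ∈ range n, t ^ k * h k) ^ 2 =
      ∑ j ∈ range n, ∑ k ∈ range n, t ^ (j + k) * (h j * h k) := by
  rw [sq, sum_mul_sum]
  refine sum_congr rfl fun j _ => sum_congr rfl fun k _ => ?_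
  ring

lemma hasDerivAt_sum_sum_pow_add_mul {n : ℕ} (hn : 2 ≤ n) (c : ℕ → ℕ → ℝ) :
    HasDerivAt (fun t : ℝ => ∑ j ∈ range n, ∑ k ∈ range n, t ^ (j + k) * c j k)
      (c 0 1 + c 1 0) 0 := by
  have hterm : ∀ j k, HasDerivAt (fun t : ℝ => t ^ (j + k) * c j k)
      (if j + k = 1 then c j k else 0) 0 := by
    intro j k
    refine ((hasDerivAt_pow (j + k) (0 : ℝ)).mul_const (c j k)).congr_deriv ?_
    split_ifs with h
    · simp [h]
    · rcases Nat.eq_zero_or_pos (j + k) with h0 | h0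
      · simp [h0]
      · simp [zero_pow (by omega : j + k - 1 ≠ 0)]
  refine (HasDerivAt.fun_sum fun j _ => HasDerivAt.fun_sum fun k _ => hterm j k).congr_deriv ?_
  obtain ⟨m, rfl⟩ : ∃ m, n = m + 2 := ⟨n - 2, by omega⟩
  rw [sum_range_succ', sum_range_succ']
  have h : ∀ j k, j + 1 + 1 + k ≠ 1 := by omega
  simp only [h, if_false, sum_const_zero, Nat.one_add, zero_add]
  simp [add_comm]

section IteratedIntegral

variable {a b c d : ℝ}

lemma integral_integral_finsetSum {ι : Type*} (s : Finset ι) {f : ι → ℝ → ℝ → ℝ}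
    (hf : ∀ i ∈ s, Continuous (uncurry (f i))) :
    ∫ u in a..b, ∫ v in c..d, ∑ i ∈ s, f i u v = ∑ i ∈ s, ∫ u in a..b, ∫ v in c..d, f i u v := by
  have hinner : ∀ u, ∫ v in c..d, ∑ i ∈ s, f i u v = ∑ i ∈ s, ∫ v in c..d, f i u v := fun u =>
    integral_finsetSum fun i hi => ((hf i hi).uncurry_left u).intervalIntegrable _ _
  simp_rw [hinner]
  exact integral_finsetSum fun i hi =>
    (continuous_parametric_intervalIntegral_of_continuous' (hf i hi) c d).intervalIntegrable _ _

lemma integral_integral_sq_sum_range_pow_mul {n : ℕ} {h : ℕ → ℝ → ℝ → ℝ}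
    (hh : ∀ k, Continuous (uncurry (h k))) (t : ℝ) :
    ∫ u in a..b, ∫ v in c..d, (∑ k ∈ range n, t ^ k * h k u v) ^ 2 =
      ∑ j ∈ range n, ∑ k ∈ range n,
        t ^ (j + k) * ∫ u in a..b, ∫ v in c..d, h j u v * h k u v := by
  have hcont : ∀ j k, Continuous (uncurry fun u v => t ^ (j + k) * (h j u v * h k u v)) :=
    fun j k => continuous_const.mul ((hh j).mul (hh k))
  simp_rw [sq_sum_range_pow_mul]
  rw [integral_integral_finsetSum
    (f := fun j u v => ∑ k ∈ range n, t ^ (j + k) * (h j u v * h k u v))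
    _ fun j _ => continuous_finsetSum _ fun k _ => hcont j k]
  refine sum_congr rfl fun j _ => ?_
  rw [integral_integral_finsetSum _ fun k _ => hcont j k]
  simp only [intervalIntegral.integral_const_mul]

lemma hasDerivAt_integral_integral_sq_sum_range_pow_mul {n : ℕ} (hn : 2 ≤ n)
    {h : ℕ → ℝ → ℝ → ℝ} (hh : ∀ k, Continuous (uncurry (h k))) :
    HasDerivAt (fun t : ℝ => ∫ u in a..b, ∫ v in c..d, (∑ k ∈ range n, t ^ k * h k u v) ^ 2)
      (2 * ∫ u in a..b, ∫ v in c..d, h 0 u v * h 1 u v) 0 := by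
  simp_rw [integral_integral_sq_sum_range_pow_mul hh]
  convert hasDerivAt_sum_sum_pow_add_mul hn _ using 1
  simp_rw [mul_comm (h 1 _ _)]
  ring

end IteratedIntegral

lemma inner_vec3 (a b c d e f : ℝ) : ⟪vec3 a b c, vec3 d e f⟫ = a * d + b * e + c * f := by
  simp [vec3, PiLp.inner_apply, Fin.sum_univ_three]
  ring

lemma cross_vec3 (a b c d e f : ℝ) :
    cross (vec3 a b c) (vec3 d e f) = vec3 (b * f - c * e) (c * d - a * f) (a * e - b * d) := rfl

lemma hasDerivAt_vec3 {a b c : ℝ → ℝ} {a' b' c' x : ℝ}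
    (ha : HasDerivAt a a' x) (hb : HasDerivAt b b' x) (hc : HasDerivAt c c' x) :
    HasDerivAt (fun s => vec3 (a s) (b s) (c s)) (vec3 a' b' c') x := by
  have hp : HasDerivAt (fun s => (![a s, b s, c s] : Fin 3 → ℝ)) ![a', b', c'] x := by
    refine hasDerivAt_pi.mpr fun i => ?_
    fin_cases i <;> simpa
  have h3 := ((EuclideanSpace.equiv (Fin 3) ℝ).symm.comp_hasFDerivAt_iff
    (f := fun s => (![a s, b s, c s] : Fin 3 → ℝ))).mpr hp.hasFDerivAt
  simpa [vec3, Function.comp_def] using h3.hasDerivAt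

/-- Here `x_u × x_v = (-1, φ_v, φ_u)`, so `e, f, g = -φ_uu, -φ_uv, -φ_vv`. -/
lemma Hnum_graph {φ φu φv φuu φuv φvv : ℝ → ℝ → ℝ}
    (hu : ∀ u v, HasDerivAt (φ · v) (φu u v) u) (hv : ∀ u v, HasDerivAt (φ u ·) (φv u v) v)
    (huu : ∀ u v, HasDerivAt (φu · v) (φuu u v) u)
    (huv : ∀ u v, HasDerivAt (φu u ·) (φuv u v) v)
    (hvv : ∀ u v, HasDerivAt (φv u ·) (φvv u v) v) (u v : ℝ) :
    Hnum (fun u v => vec3 (φ u v) v u) u v =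
      -φuu u v * (φv u v ^ 2 + 1) + 2 * φu u v * φv u v * φuv u v
        - φvv u v * (φu u v ^ 2 + 1) := by
  have hpu : pu (fun u v => vec3 (φ u v) v u) = fun u v => vec3 (φu u v) 0 1 :=
    funext₂ fun u v => (hasDerivAt_vec3 (hu u v) (hasDerivAt_const u v) (hasDerivAt_id u)).deriv
  have hpv : pv (fun u v => vec3 (φ u v) v u) = fun u v => vec3 (φv u v) 1 0 :=
    funext₂ fun u v => (hasDerivAt_vec3 (hv u v) (hasDerivAt_id v) (hasDerivAt_const v u)).deriv
  have hpuu : pu (fun u v => vec3 (φu u v) 0 1) u v = vec3 (φuu u v) 0 0 :=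
    (hasDerivAt_vec3 (huu u v) (hasDerivAt_const u 0) (hasDerivAt_const u 1)).deriv
  have hpuv : pv (fun u v => vec3 (φu u v) 0 1) u v = vec3 (φuv u v) 0 0 :=
    (hasDerivAt_vec3 (huv u v) (hasDerivAt_const v 0) (hasDerivAt_const v 1)).deriv
  have hpvv : pv (fun u v => vec3 (φv u v) 1 0) u v = vec3 (φvv u v) 0 0 :=
    (hasDerivAt_vec3 (hvv u v) (hasDerivAt_const v 1) (hasDerivAt_const v 0)).deriv
  simp only [Hnum, Emag, Fmag, Gmag, emag, fmag, gmag, hpu, hpv, hpuu, hpuv, hpvv, cross_vec3,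
    inner_vec3]
  ring

def bump (s : ℝ) : ℝ := s * (1 - s) * (1 - 2 * s)

def bump' (s : ℝ) : ℝ := 1 - 6 * s + 6 * s ^ 2

def bump'' (s : ℝ) : ℝ := 12 * s - 6

lemma hasDerivAt_bump (s : ℝ) : HasDerivAt bump (bump' s) s := by
  have h := ((hasDerivAt_id s).mul ((hasDerivAt_id s).const_sub 1)).mul
    (((hasDerivAt_id s).const_mul 2).const_sub 1)
  refine h.congr_deriv ?_
  simp only [bump', id, Pi.mul_apply]
  ring

lemma hasDerivAt_bump' (s : ℝ) : HasDerivAt bump' (bump'' s) s := by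
  have h := (((hasDerivAt_id s).const_mul 6).const_sub 1).add ((hasDerivAt_pow 2 s).const_mul 6)
  refine h.congr_deriv ?_
  simp only [bump'']
  ring

lemma bilinVar_eq (t : ℝ) :
    bilinVar t = fun u v => vec3 (u + v - 2 * u * v + 4 * t * (bump u * bump v)) v u := by
  funext u v
  simp only [bilinVar, bump]
  ring_nf

/-- The formula of `Hnum_graph` expanded in powers of `t`, for `φ_u = 1 - 2v + 4t bump' u bump v`,
`φ_v = 1 - 2u + 4t bump u bump' v`, `φ_uv = -2 + 4t bump' u bump' v`, `φ_uu = 4t bump'' u bump v`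
and `φ_vv = 4t bump u bump'' v`. -/
def curvatureCoeff : ℕ → ℝ → ℝ → ℝ
  | 0, u, v => -4 * (1 - 2 * u) * (1 - 2 * v)
  | 1, u, v => -4 * bump'' u * bump v * ((1 - 2 * u) ^ 2 + 1)
      - 4 * bump u * bump'' v * ((1 - 2 * v) ^ 2 + 1)
      - 16 * ((1 - 2 * v) * bump u * bump' v + (1 - 2 * u) * bump' u * bump v)
      + 8 * (1 - 2 * u) * (1 - 2 * v) * bump' u * bump' v
  | 2, u, v => -32 * (1 - 2 * u) * bump'' u * bump v * bump u * bump' v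
      - 32 * (1 - 2 * v) * bump u * bump'' v * bump' u * bump v
      - 64 * bump' u * bump v * bump u * bump' v
      + 32 * ((1 - 2 * v) * bump u * bump' v + (1 - 2 * u) * bump' u * bump v)
        * bump' u * bump' v
  | 3, u, v => -64 * bump'' u * bump v * (bump u * bump' v) ^ 2
      - 64 * bump u * bump'' v * (bump' u * bump v) ^ 2
      + 128 * (bump u * bump' u) * (bump v * bump' v) * (bump' u * bump' v)
  | _, _, _ => 0

lemma continuous_curvatureCoeff (k : ℕ) : Continuous (uncurry (curvatureCoeff k)) := by
  rcases k with _ | _ | _ | _ | k <;>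
    simp only [curvatureCoeff, bump, bump', bump'', uncurry_def] <;> fun_prop

lemma Hnum_bilinVar (t u v : ℝ) :
    Hnum (bilinVar t) u v = ∑ k ∈ range 4, t ^ k * curvatureCoeff k u v := by
  have hu : ∀ u v, HasDerivAt (fun s => s + v - 2 * s * v + 4 * t * (bump s * bump v))
      (1 - 2 * v + 4 * t * (bump' u * bump v)) u := fun u v =>
    ((((hasDerivAt_id u).add_const v).sub (((hasDerivAt_id u).const_mul 2).mul_const v)).add
      (((hasDerivAt_bump u).mul_const (bump v)).const_mul (4 * t))).congr_deriv (by simp)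
  have hv : ∀ u v, HasDerivAt (fun s => u + s - 2 * u * s + 4 * t * (bump u * bump s))
      (1 - 2 * u + 4 * t * (bump u * bump' v)) v := fun u v =>
    ((((hasDerivAt_id v).const_add u).sub ((hasDerivAt_id v).const_mul (2 * u))).add
      (((hasDerivAt_bump v).const_mul (bump u)).const_mul (4 * t))).congr_deriv (by simp)
  have huu : ∀ u v, HasDerivAt (fun s => 1 - 2 * v + 4 * t * (bump' s * bump v))
      (4 * t * (bump'' u * bump v)) u := fun u v =>
    (((hasDerivAt_bump' u).mul_const (bump v)).const_mul (4 * t)).const_add (1 - 2 * v)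
  have huv : ∀ u v, HasDerivAt (fun s => 1 - 2 * s + 4 * t * (bump' u * bump s))
      (-2 + 4 * t * (bump' u * bump' v)) v := fun u v =>
    (((hasDerivAt_id v).const_mul 2).const_sub 1).add
      (((hasDerivAt_bump v).const_mul (bump' u)).const_mul (4 * t)) |>.congr_deriv (by simp)
  have hvv : ∀ u v, HasDerivAt (fun s => 1 - 2 * u + 4 * t * (bump u * bump' s))
      (4 * t * (bump u * bump'' v)) v := fun u v =>
    (((hasDerivAt_bump' v).const_mul (bump u)).const_mul (4 * t)).const_add (1 - 2 * u)
  rw [bilinVar_eq, Hnum_graph hu hv huu huv hvv]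
  simp only [sum_range_succ, sum_range_zero, curvatureCoeff]
  ring

lemma integral_integral_curvatureCoeff_zero_mul_one :
    ∫ u in (0:ℝ)..1, ∫ v in (0:ℝ)..1, curvatureCoeff 0 u v * curvatureCoeff 1 u v =
      -256 / 75 := by
  simp only [curvatureCoeff, bump, bump', bump'']
  ring_nf
  simp (disch := (apply Continuous.intervalIntegrable; fun_prop)) only
    [intervalIntegral.integral_add, intervalIntegral.integral_sub, intervalIntegral.integral_neg,
    intervalIntegral.integral_const_mul, intervalIntegral.integral_mul_const,
    intervalIntegral.integral_const_mul (f := fun x => x),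
    intervalIntegral.integral_mul_const (f := fun x => x), integral_pow, integral_id]
  norm_num

/-- (i) For fixed (u,v) the mean-curvature numerator of the family is a polynomial of
degree at most 3 in t, with value −4(1−2u)(1−2v) at t = 0; (ii) the mean-square curvature
μ₁²(t) = ∫₀¹∫₀¹ H₁(u,v,t)² du dv has strictly negative derivative at t = 0. -/
theorem stmt_17 :
    (∀ u v : ℝ, (∃ a₀ a₁ a₂ a₃ : ℝ, ∀ t : ℝ,
        Hnum (bilinVar t) u v = a₀ + a₁ * t + a₂ * t ^ 2 + a₃ * t ^ 3) ∧
      Hnum (bilinVar 0) u v = -4 * (1 - 2 * u) * (1 - 2 * v)) ∧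
    (DifferentiableAt ℝ
        (fun t : ℝ => ∫ u in (0:ℝ)..1, ∫ v in (0:ℝ)..1, (Hnum (bilinVar t) u v) ^ 2) 0 ∧
      deriv (fun t : ℝ =>
        ∫ u in (0:ℝ)..1, ∫ v in (0:ℝ)..1, (Hnum (bilinVar t) u v) ^ 2) 0 < 0) := by
  have hμ : HasDerivAt (fun t : ℝ =>
      ∫ u in (0:ℝ)..1, ∫ v in (0:ℝ)..1, (Hnum (bilinVar t) u v) ^ 2) (-512 / 75) 0 := by
    simp_rw [Hnum_bilinVar]
    convert hasDerivAt_integral_integral_sq_sum_range_pow_mul (n := 4) (by norm_num)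
      continuous_curvatureCoeff using 1
    rw [integral_integral_curvatureCoeff_zero_mul_one]
    norm_num
  refine ⟨fun u v => ⟨⟨curvatureCoeff 0 u v, curvatureCoeff 1 u v, curvatureCoeff 2 u v,
    curvatureCoeff 3 u v, fun t => ?_⟩, ?_⟩, hμ.differentiableAt, ?_⟩
  · rw [Hnum_bilinVar]
    simp only [sum_range_succ, sum_range_zero]
    ring
  · simp [Hnum_bilinVar, sum_range_succ, curvatureCoeff]
  · rw [hμ.deriv]
    norm_num
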